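/- arXiv:0704.2264 — 4 statements merged into one kernel-verified Lean document; each statement's English description precedes it below -/
import Mathlib

section
/- The chromatic polynomial of the graph X(3,3) factors as P(X(3,3), x) = x(x-1)(x-2)(x^8 - 17x^7 + 137x^6 - 677x^5 + 2228x^4 - 4969x^3 + 7284x^2 - 6363x + 2509). -/
/-!
A proper colouring of `X(s,t)` is a colouring `a, b, c, d, e` of `v0, …, v4` with `b ≠ c` and
`d ≠ e`, together with colours for the vertices of `S` avoiding `{a, b, d}` and colours for the
vertices of `T` avoiding `{a, c, e}`. Hence `P(X(s,t), k)` is the sum of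
`(k - |{a,b,d}|)^s (k - |{a,c,e}|)^t` over such `a, b, c, d, e`. Expanding `[b ≠ c] [d ≠ e]` by
inclusion–exclusion reduces it to the row sums `∑_d (k - |{a,b,d}|)^n`, which depend only on
whether `b = a`. This gives a closed form for all `s, t`, which at `s = t = 3` is the stated
polynomial; a polynomial is determined by its values at the natural numbers.
-/

/-- The number of proper colorings of `G` with a palette of `k` colors. -/
noncomputable def numColorings {V : Type} [Fintype V] (G : SimpleGraph V) (k : ℕ) : ℕ :=
  Nat.card {f : V → Fin k // ∀ u v, G.Adj u v → f u ≠ f v}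

/-- `P` is the chromatic polynomial of `G`: for every natural number `k`, evaluating `P`
at `k` gives the number of proper `k`-colorings of `G`. -/
def IsChromaticPolynomial {V : Type} [Fintype V] (G : SimpleGraph V) (P : Polynomial ℝ) : Prop :=
  ∀ k : ℕ, P.eval (k : ℝ) = numColorings G k

/-- The adjacency-generating relation of the graph `X(s,t)`: the vertices `v0, v1, v2, v3, v4`
are `Sum.inl 0, …, Sum.inl 4`, the independent set `S` is `Fin s` (as `Sum.inr (Sum.inl _)`)
and the independent set `T` is `Fin t` (as `Sum.inr (Sum.inr _)`).  The edges are: `v1v2`,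
`v3v4`, every vertex of `S` joined to each of `v0, v1, v3`, and every vertex of `T` joined
to each of `v0, v2, v4`. -/
def XAdj (s t : ℕ) (x y : Fin 5 ⊕ Fin s ⊕ Fin t) : Prop :=
  (x = Sum.inl 1 ∧ y = Sum.inl 2) ∨ (x = Sum.inl 3 ∧ y = Sum.inl 4) ∨
    ((∃ i : Fin s, x = Sum.inr (Sum.inl i)) ∧ (y = Sum.inl 0 ∨ y = Sum.inl 1 ∨ y = Sum.inl 3)) ∨
    ((∃ j : Fin t, x = Sum.inr (Sum.inr j)) ∧ (y = Sum.inl 0 ∨ y = Sum.inl 2 ∨ y = Sum.inl 4))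

/-- The graph `X(s,t)`. -/
def graphX (s t : ℕ) : SimpleGraph (Fin 5 ⊕ Fin s ⊕ Fin t) :=
  SimpleGraph.fromRel (XAdj s t)

open Finset Polynomial

theorem sum_fun_fin_succ {α M : Type*} [Fintype α] [AddCommMonoid M] {n : ℕ}
    (F : (Fin (n + 1) → α) → M) :
    ∑ g, F g = ∑ a, ∑ g : Fin n → α, F (Fin.cons a g) := by
  rw [← (Fin.consEquiv fun _ => α).sum_comp, Fintype.sum_prod_type]
  rfl

theorem sum_ite_ne_and_ne {β γ R : Type*} [Fintype β] [Fintype γ] [DecidableEq β]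
    [DecidableEq γ] [CommRing R] (f g : β → γ → R) :
    ∑ b, ∑ c, ∑ d, ∑ e, (if b ≠ c ∧ d ≠ e then f b d * g c e else 0) =
      (∑ b, ∑ d, f b d) * (∑ c, ∑ e, g c e) - ∑ b, (∑ d, f b d) * (∑ e, g b e)
        - ∑ d, (∑ b, f b d) * (∑ c, g c d) + ∑ b, ∑ d, f b d * g b d := by
  have incl_excl : ∀ b c d e, (if b ≠ c ∧ d ≠ e then f b d * g c e else 0) =
      f b d * g c e - (if b = c then f b d * g c e else 0) - (if d = e then f b d * g c e else 0)
        + (if b = c then if d = e then f b d * g c e else 0 else 0) := by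
    intro b c d e
    by_cases hbc : b = c <;> by_cases hde : d = e <;> simp [hbc, hde]
  simp only [incl_excl, sum_add_distrib, sum_sub_distrib, sum_ite_irrel, sum_const_zero, sum_ite_eq,
    mem_univ, if_true]
  simp only [sum_mul]
  simp only [mul_sum]
  congr 3
  · exact sum_congr rfl fun _ _ => sum_comm
  · exact (sum_congr rfl fun _ _ => sum_comm).trans sum_comm

/-- Evaluated at `k`, this counts the colourings of `v3` and of `n` vertices of `S` once `v0, v1`
carry `m` distinct colours (see `sum_card_compl_pow`). -/
noncomputable def rowPoly (m n : ℕ) : ℝ[X] :=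
  (m : ℝ[X]) * (X - (m : ℝ[X])) ^ n + (X - (m : ℝ[X])) * (X - (m : ℝ[X]) - 1) ^ n

section

variable {α : Type*} [Fintype α] [DecidableEq α]

theorem sum_apply_card_insert {R : Type*} [CommRing R] (s : Finset α) (G : ℕ → R) :
    ∑ d, G #(insert d s) = #s * G #s + (Fintype.card α - #s) * G (#s + 1) := by
  simp only [card_insert_eq_ite, apply_ite G, sum_ite, sum_const, filter_mem_eq_inter, univ_inter,
    filter_not, ← compl_eq_univ_sdiff, card_compl, nsmul_eq_mul, Nat.cast_sub (card_le_univ s)]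

theorem sum_apply_card_pair {R : Type*} [CommRing R] (a : α) (G : ℕ → R) :
    ∑ b : α, G #{a, b} = G 1 + (Fintype.card α - 1) * G 2 := by
  simpa only [pair_comm _ a, card_singleton, Nat.cast_one, one_mul] using
    sum_apply_card_insert {a} G

theorem sum_card_compl_pow (a b : α) (n : ℕ) :
    ∑ d, (#({a, b, d}ᶜ : Finset α) : ℝ) ^ n =
      (rowPoly #{a, b} n).eval (Fintype.card α : ℝ) := by
  have h (d : α) : (#({a, b, d}ᶜ : Finset α) : ℝ) ^ n =
      ((Fintype.card α : ℝ) - #(insert d {a, b})) ^ n := by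
    rw [card_compl, Nat.cast_sub (card_le_univ _), pair_comm b d, insert_comm a d]
  simp only [h, sum_apply_card_insert (G := fun j => ((Fintype.card α : ℝ) - j) ^ n), rowPoly]
  simp only [eval_add, eval_mul, eval_pow, eval_sub, eval_X, eval_natCast, eval_one, Nat.cast_add,
    Nat.cast_one]
  ring

theorem sum_card_compl_pow_left (a d : α) (n : ℕ) :
    ∑ b, (#({a, b, d}ᶜ : Finset α) : ℝ) ^ n =
      (rowPoly #{a, d} n).eval (Fintype.card α : ℝ) := by
  simpa only [pair_comm _ d] using sum_card_compl_pow a d n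

end

theorem IsChromaticPolynomial.unique {V : Type} [Fintype V] {G : SimpleGraph V} {P Q : ℝ[X]}
    (hP : IsChromaticPolynomial G P) (hQ : IsChromaticPolynomial G Q) : P = Q :=
  eq_of_infinite_eval_eq P Q <| (Set.infinite_range_of_injective Nat.cast_injective).mono <| by
    rintro _ ⟨k, rfl⟩
    exact (hP k).trans (hQ k).symm

theorem graphX_proper_iff {s t k : ℕ} (f : Fin 5 ⊕ Fin s ⊕ Fin t → Fin k) :
    (∀ u v, (graphX s t).Adj u v → f u ≠ f v) ↔
      f (.inl 1) ≠ f (.inl 2) ∧ f (.inl 3) ≠ f (.inl 4) ∧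
      (∀ i, f (.inr (.inl i)) ∉ ({f (.inl 0), f (.inl 1), f (.inl 3)} : Finset (Fin k))) ∧
      (∀ j, f (.inr (.inr j)) ∉ ({f (.inl 0), f (.inl 2), f (.inl 4)} : Finset (Fin k))) := by
  simp only [graphX, SimpleGraph.fromRel_adj]
  constructor
  · intro h
    refine ⟨h _ _ ⟨by simp, by simp [XAdj]⟩, h _ _ ⟨by simp, by simp [XAdj]⟩, fun i => ?_,
      fun j => ?_⟩ <;>
    simp only [mem_insert, mem_singleton, not_or] <;>
    exact ⟨h _ _ ⟨by simp, by simp [XAdj]⟩, h _ _ ⟨by simp, by simp [XAdj]⟩,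
      h _ _ ⟨by simp, by simp [XAdj]⟩⟩
  · rintro ⟨h12, h34, hS, hT⟩
    have key : ∀ u v, XAdj s t u v → f u ≠ f v := by
      rintro u v (⟨rfl, rfl⟩ | ⟨rfl, rfl⟩ | ⟨⟨i, rfl⟩, hv | hv | hv⟩ |
        ⟨⟨j, rfl⟩, hv | hv | hv⟩) <;> simp_all
    rintro u v ⟨-, huv | hvu⟩
    exacts [key u v huv, (key v u hvu).symm]

def graphXColoringEquiv (s t k : ℕ) :
    {f : Fin 5 ⊕ Fin s ⊕ Fin t → Fin k // ∀ u v, (graphX s t).Adj u v → f u ≠ f v} ≃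
      Σ g : {g : Fin 5 → Fin k // g 1 ≠ g 2 ∧ g 3 ≠ g 4},
        (Fin s → ({g.1 0, g.1 1, g.1 3}ᶜ : Finset (Fin k))) ×
          (Fin t → ({g.1 0, g.1 2, g.1 4}ᶜ : Finset (Fin k))) where
  toFun f :=
    have hf := (graphX_proper_iff f.1).1 f.2
    ⟨⟨f.1 ∘ Sum.inl, hf.1, hf.2.1⟩,
      fun i => ⟨f.1 (.inr (.inl i)), mem_compl.2 (hf.2.2.1 i)⟩,
      fun j => ⟨f.1 (.inr (.inr j)), mem_compl.2 (hf.2.2.2 j)⟩⟩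
  invFun x := ⟨Sum.elim x.1.1 (Sum.elim (fun i => x.2.1 i) (fun j => x.2.2 j)),
    (graphX_proper_iff _).2 ⟨x.1.2.1, x.1.2.2, fun i => mem_compl.1 (x.2.1 i).2,
      fun j => mem_compl.1 (x.2.2 j).2⟩⟩
  left_inv f := Subtype.ext <| funext <| by rintro (_ | _ | _) <;> rfl
  right_inv _ := rfl

theorem numColorings_graphX (s t k : ℕ) :
    numColorings (graphX s t) k =
      ∑ a : Fin k, ∑ b, ∑ c, ∑ d, ∑ e,
        if b ≠ c ∧ d ≠ e then
          #({a, b, d}ᶜ : Finset (Fin k)) ^ s * #({a, c, e}ᶜ : Finset (Fin k)) ^ t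
        else 0 := by
  calc numColorings (graphX s t) k
      = ∑ g : {g : Fin 5 → Fin k // g 1 ≠ g 2 ∧ g 3 ≠ g 4},
          #({g.1 0, g.1 1, g.1 3}ᶜ : Finset (Fin k)) ^ s *
            #({g.1 0, g.1 2, g.1 4}ᶜ : Finset (Fin k)) ^ t := by
        rw [numColorings, Nat.card_congr (graphXColoringEquiv s t k), Nat.card_eq_fintype_card,
          Fintype.card_sigma]
        simp only [Fintype.card_prod, Fintype.card_fun, Fintype.card_coe, Fintype.card_fin]
    _ = ∑ g : Fin 5 → Fin k, if g 1 ≠ g 2 ∧ g 3 ≠ g 4 then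
          #({g 0, g 1, g 3}ᶜ : Finset (Fin k)) ^ s * #({g 0, g 2, g 4}ᶜ : Finset (Fin k)) ^ t
        else 0 := by
        rw [← sum_filter]
        symm
        exact sum_subtype _ (fun _ => mem_filter_univ _) _
    _ = _ := by
        simp only [sum_fun_fin_succ, Fintype.sum_unique]
        rfl

noncomputable def totalPoly (n : ℕ) : ℝ[X] := rowPoly 1 n + (X - 1) * rowPoly 2 n

/-- Inclusion–exclusion over the edges `v1v2` and `v3v4`: the first term ignores both, the second
removes the colourings with `c = b` and those with `e = d` (equally many), the third adds back those
with both; the factor `X` is the colour of `v0`. -/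
noncomputable def chromaticPolyX (s t : ℕ) : ℝ[X] :=
  X * (totalPoly s * totalPoly t
    - 2 * (rowPoly 1 s * rowPoly 1 t + (X - 1) * (rowPoly 2 s * rowPoly 2 t))
    + totalPoly (s + t))

theorem isChromaticPolynomial_graphX (s t : ℕ) :
    IsChromaticPolynomial (graphX s t) (chromaticPolyX s t) := by
  intro k
  rw [numColorings_graphX]
  push_cast
  simp only [sum_ite_ne_and_ne, ← pow_add, sum_card_compl_pow, sum_card_compl_pow_left]
  simp only [sum_apply_card_pair _ fun m => eval (k : ℝ) (rowPoly m s),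
    sum_apply_card_pair _ fun m => eval (k : ℝ) (rowPoly m t),
    sum_apply_card_pair _ fun m => eval (k : ℝ) (rowPoly m (s + t)),
    sum_apply_card_pair _ fun m => eval (k : ℝ) (rowPoly m s) * eval (k : ℝ) (rowPoly m t),
    Fintype.card_fin, sum_const, card_univ, nsmul_eq_mul,
    chromaticPolyX, totalPoly, eval_mul, eval_add, eval_sub, eval_X, eval_one, eval_ofNat]
  ring

open Polynomial in
/-- The chromatic polynomial of `X(3,3)` factors as
`x (x-1) (x-2) (x^8 - 17x^7 + 137x^6 - 677x^5 + 2228x^4 - 4969x^3 + 7284x^2 - 6363x + 2509)`. -/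
theorem chromaticPolynomial_X33 (P : Polynomial ℝ)
    (hP : IsChromaticPolynomial (graphX 3 3) P) :
    P = X * (X - 1) * (X - 2) *
      (X ^ 8 - 17 * X ^ 7 + 137 * X ^ 6 - 677 * X ^ 5 + 2228 * X ^ 4 - 4969 * X ^ 3
        + 7284 * X ^ 2 - 6363 * X + 2509) := by
  rw [hP.unique (isChromaticPolynomial_graphX 3 3)]
  simp only [chromaticPolyX, totalPoly, rowPoly, Nat.cast_one, Nat.cast_ofNat]
  ring
end

section
/- For all integers s, t ≥ 3, the graph X(s,t) is 3-connected; that is, it has more than 3 vertices and remains connected after the deletion of any set of at most 2 vertices. -/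
/-! Removing two vertices leaves some `a ∈ S` and `b ∈ T`. Any two vertices of `S` share the three
neighbours `v0, v1, v3`, one of which survives, and likewise for `T` with `v0, v2, v4`; every
`vᵢ` is adjacent to `a` or to `b`. Finally `a` and `b` are joined by three paths with disjoint
interiors, and two deleted vertices cannot block all three. -/

open Finset SimpleGraph Function

theorem Finset.exists_mem_apply_notMem_of_card_lt {α β : Type*} {f : β ↪ α} {H : Finset β}
    {W : Finset α} (h : #W < #H) : ∃ b ∈ H, f b ∉ W := by
  obtain ⟨_, hfb, hfbW⟩ := exists_mem_notMem_of_card_lt_card (s := W) (t := H.map f) (by simpa)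
  obtain ⟨b, hb, rfl⟩ := mem_map.1 hfb
  exact ⟨b, hb, hfbW⟩

theorem Finset.exists_disjoint_of_card_lt {ι α : Type*} [Fintype ι] {A : ι → Finset α}
    (hA : Pairwise (Disjoint on A)) {W : Finset α} (hW : #W < Fintype.card ι) :
    ∃ i, Disjoint (A i) W := by
  by_contra! h
  choose f hf using fun i => Finset.not_disjoint_iff.1 (h i)
  have hinj : Set.InjOn f (univ : Finset ι) := fun i _ j _ hij => by
    by_contra hne
    exact Finset.disjoint_left.1 (hA hne) (hf i).1 (hij ▸ (hf j).1)
  have := card_le_card_of_injOn f (fun i _ => (hf i).2) hinj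
  simp only [card_univ] at this
  omega

theorem SimpleGraph.induce_reachable_of_adj {V : Type*} {G : SimpleGraph V} {U : Set V}
    {x y : V} (hx : x ∈ U) (hy : y ∈ U) (h : G.Adj x y) :
    (G.induce U).Reachable ⟨x, hx⟩ ⟨y, hy⟩ :=
  Adj.reachable (by simpa using h)

section graphX

variable {s t : ℕ}

theorem graphX_adj_S (i : Fin s) {k : Fin 5} (hk : k ∈ ({0, 1, 3} : Finset (Fin 5))) :
    (graphX s t).Adj (.inr (.inl i)) (.inl k) := by
  simp only [mem_insert, mem_singleton] at hk
  rcases hk with rfl | rfl | rfl <;> simp [graphX, XAdj]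

theorem graphX_adj_T (j : Fin t) {k : Fin 5} (hk : k ∈ ({0, 2, 4} : Finset (Fin 5))) :
    (graphX s t).Adj (.inr (.inr j)) (.inl k) := by
  simp only [mem_insert, mem_singleton] at hk
  rcases hk with rfl | rfl | rfl <;> simp [graphX, XAdj]

theorem graphX_adj_one_two : (graphX s t).Adj (.inl 1) (.inl 2) := by
  simp [graphX, XAdj]

theorem graphX_adj_three_four : (graphX s t).Adj (.inl 3) (.inl 4) := by
  simp [graphX, XAdj]

variable {W : Finset (Fin 5 ⊕ Fin s ⊕ Fin t)}

theorem graphX_reachable_S_S (hW : #W ≤ 2) {i i' : Fin s} (hi : .inr (.inl i) ∉ W)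
    (hi' : .inr (.inl i') ∉ W) : ((graphX s t).induce (↑W)ᶜ).Reachable ⟨_, hi⟩ ⟨_, hi'⟩ := by
  obtain ⟨k, hk, hkW⟩ := exists_mem_apply_notMem_of_card_lt (f := .inl) (W := W)
    (H := {0, 1, 3}) (hW.trans_lt (by decide))
  exact (induce_reachable_of_adj hi hkW (graphX_adj_S i hk)).trans
    (induce_reachable_of_adj hkW hi' (graphX_adj_S i' hk).symm)

theorem graphX_reachable_T_T (hW : #W ≤ 2) {j j' : Fin t} (hj : .inr (.inr j) ∉ W)
    (hj' : .inr (.inr j') ∉ W) : ((graphX s t).induce (↑W)ᶜ).Reachable ⟨_, hj⟩ ⟨_, hj'⟩ := by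
  obtain ⟨k, hk, hkW⟩ := exists_mem_apply_notMem_of_card_lt (f := .inl) (W := W)
    (H := {0, 2, 4}) (hW.trans_lt (by decide))
  exact (induce_reachable_of_adj hj hkW (graphX_adj_T j hk)).trans
    (induce_reachable_of_adj hkW hj' (graphX_adj_T j' hk).symm)

theorem graphX_reachable_S_T (hW : #W ≤ 2) {i : Fin s} {j : Fin t} (hi : .inr (.inl i) ∉ W)
    (hj : .inr (.inr j) ∉ W) : ((graphX s t).induce (↑W)ᶜ).Reachable ⟨_, hi⟩ ⟨_, hj⟩ := by
  -- The paths `S – v0 – T`, `S – v1 – v2 – T` and `S – v3 – v4 – T` have disjoint interiors.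
  obtain ⟨p, hp⟩ := exists_disjoint_of_card_lt
    (A := ![({0} : Finset (Fin 5)), {1, 2}, {3, 4}]) (by unfold Pairwise; decide)
    (W := W.toLeft) ((card_toLeft_le.trans hW).trans_lt (by decide))
  fin_cases p <;> simp only [Fin.isValue, Fin.reduceFinMk, Matrix.cons_val, disjoint_insert_left,
    disjoint_singleton_left, mem_toLeft] at hp
  · exact (induce_reachable_of_adj hi hp (graphX_adj_S i (by decide))).trans
      (induce_reachable_of_adj hp hj (graphX_adj_T j (by decide)).symm)
  · obtain ⟨h1, h2⟩ := hp
    exact ((induce_reachable_of_adj hi h1 (graphX_adj_S i (by decide))).trans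
      (induce_reachable_of_adj h1 h2 graphX_adj_one_two)).trans
      (induce_reachable_of_adj h2 hj (graphX_adj_T j (by decide)).symm)
  · obtain ⟨h3, h4⟩ := hp
    exact ((induce_reachable_of_adj hi h3 (graphX_adj_S i (by decide))).trans
      (induce_reachable_of_adj h3 h4 graphX_adj_three_four)).trans
      (induce_reachable_of_adj h4 hj (graphX_adj_T j (by decide)).symm)

end graphX

/-- For all `s, t ≥ 3`, the graph `X(s,t)` is 3-connected: it has more than 3 vertices and
remains connected after the deletion of any set of at most 2 vertices. -/
theorem graphX_three_connected (s t : ℕ) (hs : 3 ≤ s) (ht : 3 ≤ t) :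
    3 < Fintype.card (Fin 5 ⊕ Fin s ⊕ Fin t) ∧
    ∀ W : Finset (Fin 5 ⊕ Fin s ⊕ Fin t), W.card ≤ 2 →
      ((graphX s t).induce ((W : Set (Fin 5 ⊕ Fin s ⊕ Fin t))ᶜ)).Connected := by
  refine ⟨by simp only [Fintype.card_sum, Fintype.card_fin]; omega, fun W hW => ?_⟩
  obtain ⟨i, -, hi⟩ := exists_mem_apply_notMem_of_card_lt (W := W) (H := univ)
    (f := Embedding.inl.trans Embedding.inr) (by simp only [card_univ, Fintype.card_fin]; omega)
  obtain ⟨j, -, hj⟩ := exists_mem_apply_notMem_of_card_lt (W := W) (H := univ)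
    (f := Embedding.inr.trans Embedding.inr) (by simp only [card_univ, Fintype.card_fin]; omega)
  have hij := graphX_reachable_S_T hW hi hj
  refine (connected_iff_exists_forall_reachable _).2 ⟨⟨_, hi⟩, ?_⟩
  rintro ⟨k | i' | j', hx⟩
  · obtain hk | hk : k ∈ ({0, 1, 3} : Finset (Fin 5)) ∨ k ∈ ({0, 2, 4} : Finset (Fin 5)) := by
      clear hx; revert k; decide
    · exact induce_reachable_of_adj hi hx (graphX_adj_S i hk)
    · exact hij.trans (induce_reachable_of_adj hj hx (graphX_adj_T j hk))
  · exact graphX_reachable_S_S hW hi hx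
  · exact hij.trans (graphX_reachable_T_T hW hj hx)
end

section
/- For all integers s, t ≥ 3, the set W = {v0, v1, v3} is an independent set of 3 vertices in X(s,t) whose deletion leaves a graph with exactly s + 1 connected components; in particular, since s + 1 > 3, the graph X(s,t) is not 1-tough. -/
/-- A graph `G` is 1-tough if for every nonempty set `W` of vertices, the number of
connected components of `G − W` is at most `|W|`. -/
def IsOneTough {V : Type} (G : SimpleGraph V) : Prop :=
  ∀ W : Set V, W.Nonempty → Nat.card ((G.induce Wᶜ).ConnectedComponent) ≤ W.ncard

/-
Removing `W = {v0, v1, v3}` deletes every neighbour of every vertex of `S`, so the `s` vertices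
of `S` become isolated, while the remaining vertices `v2`, `v4` and `T` stay connected through
`v2` (each vertex of `T` is adjacent to `v2` and `v4`, and `T` is nonempty). Hence `X(s,t) − W`
has `s + 1` components, more than `|W| = 3`.
-/

open SimpleGraph

theorem SimpleGraph.Reachable.eq_of_forall_adj {V α : Type*} {G : SimpleGraph V} {f : V → α}
    (hf : ∀ x y, G.Adj x y → f x = f y) {x y : V} (h : G.Reachable x y) : f x = f y := by
  obtain ⟨p⟩ := h
  induction p with
  | nil => rfl
  | cons hadj _ ih => exact (hf _ _ hadj).trans ih

theorem SimpleGraph.nat_card_connectedComponent_eq_of_reachable_iff {V α : Type*}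
    {G : SimpleGraph V} (f : V → α) (hf : Function.Surjective f)
    (h : ∀ x y, G.Reachable x y ↔ f x = f y) : Nat.card G.ConnectedComponent = Nat.card α := by
  let F : G.ConnectedComponent → α := ConnectedComponent.lift f fun x y p _ ↦ (h x y).1 ⟨p⟩
  refine Nat.card_eq_of_bijective F ⟨fun c d ↦ ?_, fun a ↦ ?_⟩
  · induction c using ConnectedComponent.ind
    induction d using ConnectedComponent.ind
    exact fun hcd ↦ ConnectedComponent.sound ((h _ _).2 hcd)
  · obtain ⟨x, rfl⟩ := hf a
    exact ⟨G.connectedComponentMk x, rfl⟩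

namespace graphX

variable {s t : ℕ}

def cut (s t : ℕ) : Set (Fin 5 ⊕ Fin s ⊕ Fin t) := {Sum.inl 0, Sum.inl 1, Sum.inl 3}

theorem ncard_cut : (cut s t).ncard = 3 := by
  rw [cut, Set.ncard_insert_of_notMem (by simp), Set.ncard_insert_of_notMem (by simp),
    Set.ncard_singleton]

theorem isIndepSet_cut : (graphX s t).IsIndepSet (cut s t) := by
  intro x hx y hy _ hadj
  simp only [cut, Set.mem_insert_iff, Set.mem_singleton_iff] at hx hy
  rcases hx with rfl | rfl | rfl <;> rcases hy with rfl | rfl | rfl <;>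
    simp [graphX, XAdj] at hadj

theorem mem_cut_of_adj_inr_inl {i : Fin s} {y : Fin 5 ⊕ Fin s ⊕ Fin t}
    (h : (graphX s t).Adj (Sum.inr (Sum.inl i)) y) : y ∈ cut s t := by
  simp only [graphX, fromRel_adj, XAdj] at h
  simp only [cut, Set.mem_insert_iff, Set.mem_singleton_iff]
  aesop

theorem adj_inr_inr_two (j : Fin t) : (graphX s t).Adj (Sum.inr (Sum.inr j)) (Sum.inl 2) := by
  simp [graphX, XAdj]

theorem adj_inr_inr_four (j : Fin t) : (graphX s t).Adj (Sum.inr (Sum.inr j)) (Sum.inl 4) := by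
  simp [graphX, XAdj]

def sIndex : Fin 5 ⊕ Fin s ⊕ Fin t → Option (Fin s)
  | Sum.inr (Sum.inl i) => some i
  | _ => none

theorem sIndex_eq_none_of_adj {x y : Fin 5 ⊕ Fin s ⊕ Fin t} (h : (graphX s t).Adj x y)
    (hy : y ∉ cut s t) : sIndex x = none := by
  rcases x with _ | _ | _
  · rfl
  · exact absurd (mem_cut_of_adj_inr_inl h) hy
  · rfl

theorem eq_of_sIndex_eq_some {x : Fin 5 ⊕ Fin s ⊕ Fin t} {i : Fin s} (h : sIndex x = some i) :
    x = Sum.inr (Sum.inl i) := by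
  rcases x with _ | _ | _ <;> simp_all [sIndex]

abbrev v2 : ↥(cut s t)ᶜ := ⟨Sum.inl 2, by simp [cut]⟩

theorem reachable_v2_of_sIndex_eq_none (ht : 0 < t) (x : ↥(cut s t)ᶜ)
    (hx : sIndex x.1 = none) : ((graphX s t).induce (cut s t)ᶜ).Reachable x v2 := by
  obtain ⟨x | i | j, hxW⟩ := x
  · obtain rfl | rfl : x = 2 ∨ x = 4 := by
      simp only [cut, Set.mem_compl_iff, Set.mem_insert_iff, Set.mem_singleton_iff,
        Sum.inl.injEq, not_or] at hxW
      omega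
    · rfl
    · let j : ↥(cut s t)ᶜ := ⟨Sum.inr (Sum.inr ⟨0, ht⟩), by simp [cut]⟩
      have h4j : ((graphX s t).induce (cut s t)ᶜ).Adj ⟨Sum.inl 4, hxW⟩ j :=
        (adj_inr_inr_four _).symm
      have hj2 : ((graphX s t).induce (cut s t)ᶜ).Adj j v2 := adj_inr_inr_two _
      exact h4j.reachable.trans hj2.reachable
  · simp [sIndex] at hx
  · have hj2 : ((graphX s t).induce (cut s t)ᶜ).Adj ⟨_, hxW⟩ v2 := adj_inr_inr_two j
    exact hj2.reachable

theorem reachable_induce_compl_cut_iff (ht : 0 < t) (x y : ↥(cut s t)ᶜ) :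
    ((graphX s t).induce (cut s t)ᶜ).Reachable x y ↔ sIndex x.1 = sIndex y.1 := by
  refine ⟨fun h ↦ h.eq_of_forall_adj (f := fun v ↦ sIndex v.1) fun a b hab ↦ ?_, fun h ↦ ?_⟩
  · exact (sIndex_eq_none_of_adj hab b.2).trans (sIndex_eq_none_of_adj hab.symm a.2).symm
  · cases hx : sIndex x.1 with
    | some i =>
      rw [Subtype.ext ((eq_of_sIndex_eq_some hx).trans (eq_of_sIndex_eq_some (h ▸ hx)).symm)]
    | none =>
      exact (reachable_v2_of_sIndex_eq_none ht x hx).trans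
        (reachable_v2_of_sIndex_eq_none ht y (h ▸ hx)).symm

theorem nat_card_connectedComponent_induce_compl_cut (ht : 0 < t) :
    Nat.card ((graphX s t).induce (cut s t)ᶜ).ConnectedComponent = s + 1 := by
  have hsurj : Function.Surjective fun x : ↥(cut s t)ᶜ ↦ sIndex x.1
    | some i => ⟨⟨Sum.inr (Sum.inl i), by simp [cut]⟩, rfl⟩
    | none => ⟨v2, rfl⟩
  rw [nat_card_connectedComponent_eq_of_reachable_iff _ hsurj (reachable_induce_compl_cut_iff ht),
    Nat.card_eq_fintype_card, Fintype.card_option, Fintype.card_fin]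

end graphX

/-- For all `s, t ≥ 3`, the set `W = {v0, v1, v3}` is an independent set of 3 vertices in
`X(s,t)` whose deletion leaves a graph with exactly `s + 1` connected components; in
particular, since `s + 1 > 3`, the graph `X(s,t)` is not 1-tough. -/
theorem graphX_not_one_tough (s t : ℕ) (hs : 3 ≤ s) (ht : 3 ≤ t)
    (W : Set (Fin 5 ⊕ Fin s ⊕ Fin t)) (hW : W = {Sum.inl 0, Sum.inl 1, Sum.inl 3}) :
    (∀ x ∈ W, ∀ y ∈ W, ¬ (graphX s t).Adj x y) ∧
    W.ncard = 3 ∧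
    Nat.card ((graphX s t).induce Wᶜ).ConnectedComponent = s + 1 ∧
    ¬ IsOneTough (graphX s t) := by
  obtain rfl : W = graphX.cut s t := hW
  have hcard := graphX.nat_card_connectedComponent_induce_compl_cut (s := s) (by omega : 0 < t)
  refine ⟨fun x hx y hy h ↦ graphX.isIndepSet_cut hx hy h.ne h, graphX.ncard_cut, hcard,
    fun htough ↦ ?_⟩
  have := htough (graphX.cut s t) ⟨Sum.inl 0, by simp [graphX.cut]⟩
  rw [hcard, graphX.ncard_cut] at this
  omega
end

section
/- For all integers s, t ≥ 3, the graph X(s,t) is not hamiltonian; that is, it contains no cycle passing through every vertex exactly once. (This follows because deleting the 3-element set {v0, v1, v3} leaves more than 3 components, while every hamiltonian graph is 1-tough.) -/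
open SimpleGraph Finset

namespace SimpleGraph.Walk

variable {V : Type} [DecidableEq V] {G : SimpleGraph V} {a : V} {p : G.Walk a a}

lemma IsHamiltonianCycle.exists_mem_darts_snd_eq (hp : p.IsHamiltonianCycle) (v : V) :
    ∃ d ∈ p.darts, d.snd = v := by
  have hv : v ∈ p.darts.map (·.snd) := by
    rw [map_snd_darts, ← support_tail_of_not_nil p hp.not_nil]
    exact hp.isHamiltonian_tail.mem_support v
  simpa using hv

lemma IsHamiltonianCycle.injOn_fst_darts (hp : p.IsHamiltonianCycle) :
    Set.InjOn (·.fst) {d : G.Dart | d ∈ p.darts} := by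
  have hnodup : (p.darts.map (·.fst)).Nodup := by
    rw [map_fst_darts]
    exact hp.isCycle.nodup_dropLast_support
  exact fun _ hd _ hd' h => List.inj_on_of_nodup_map hnodup hd hd' h

/-- Sending each vertex of `A` to its predecessor on the cycle is injective. -/
theorem IsHamiltonianCycle.card_le_card_of_adj_mem (hp : p.IsHamiltonianCycle)
    {A B : Finset V} (hAB : ∀ v ∈ A, ∀ w, G.Adj v w → w ∈ B) : #A ≤ #B := by
  set D := p.darts.toFinset.filter (·.snd ∈ A)
  have hAD : A ⊆ D.image (·.snd) := fun v hv => by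
    obtain ⟨d, hd, rfl⟩ := hp.exists_mem_darts_snd_eq v
    exact mem_image.2 ⟨d, by simp [D, hd, hv], rfl⟩
  have hDB : #D ≤ #B := by
    refine card_le_card_of_injOn (·.fst) (fun d hd => ?_) ?_
    · have hd := (mem_filter.1 hd).2
      exact hAB _ hd _ d.adj.symm
    · exact hp.injOn_fst_darts.mono fun d hd => by simpa [D] using (mem_filter.1 hd).1
  calc #A ≤ #(D.image (·.snd)) := card_le_card hAD
    _ ≤ #D := card_image_le
    _ ≤ #B := hDB

end SimpleGraph.Walk

lemma graphX_adj_inr {s t : ℕ} {x : Fin s ⊕ Fin t} {v : Fin 5 ⊕ Fin s ⊕ Fin t}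
    (h : (graphX s t).Adj (.inr x) v) : ∃ w, v = .inl w := by
  obtain ⟨-, h | h⟩ := h <;> simp only [XAdj] at h
  · rcases h with ⟨h, -⟩ | ⟨h, -⟩ | ⟨-, h | h | h⟩ | ⟨-, h | h | h⟩ <;>
      first | exact absurd h (by simp) | exact ⟨_, h⟩
  · rcases h with ⟨-, h⟩ | ⟨-, h⟩ | ⟨-, h | h | h⟩ | ⟨-, h | h | h⟩ <;> exact absurd h (by simp)

/-- For all `s, t ≥ 3`, the graph `X(s,t)` is not hamiltonian: it contains no cycle passing
through every vertex exactly once. -/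
theorem graphX_not_hamiltonian (s t : ℕ) (hs : 3 ≤ s) (ht : 3 ≤ t) :
    ¬ ∃ (a : Fin 5 ⊕ Fin s ⊕ Fin t) (p : (graphX s t).Walk a a), p.IsHamiltonianCycle := by
  rintro ⟨a, p, hp⟩
  have hcard := hp.card_le_card_of_adj_mem (A := univ.map .inr) (B := univ.map .inl)
    fun v hv w hw => by
      obtain ⟨x, -, rfl⟩ := mem_map.1 hv
      obtain ⟨u, rfl⟩ := graphX_adj_inr hw
      exact mem_map_of_mem _ (mem_univ u)
  simp only [card_map, card_univ, Fintype.card_sum, Fintype.card_fin] at hcard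
  omega
end
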